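/- arXiv:2605.04571 — 4 statements merged into one kernel-verified Lean document; each statement's English description precedes it below -/
import Mathlib

section
/- Let λ1, λ2, λ3 > 0 be real numbers. Then the 4×4 complex matrix I⊗I + λ1·(σ1⊗σ1) − λ2·(σ2⊗σ2) + λ3·(σ3⊗σ3) is positive semidefinite if and only if max(−λ1 + λ2 + λ3, λ1 − λ2 + λ3, λ1 + λ2 − λ3) ≤ 1. -/
open Matrix Kronecker ComplexOrder

noncomputable def σ1 : Matrix (Fin 2) (Fin 2) ℂ := !![0, 1; 1, 0]
noncomputable def σ2 : Matrix (Fin 2) (Fin 2) ℂ := !![0, -Complex.I; Complex.I, 0]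
noncomputable def σ3 : Matrix (Fin 2) (Fin 2) ℂ := !![1, 0; 0, -1]

/-!
In the Bell basis `(|00⟩ ± |11⟩)/√2`, `(|01⟩ ± |10⟩)/√2` the matrix is diagonal, with eigenvalues
`1 + λ₁ + λ₂ + λ₃`, `1 - λ₁ - λ₂ + λ₃`, `1 + λ₁ - λ₂ - λ₃`, `1 - λ₁ + λ₂ - λ₃`. So it is positive
semidefinite iff these four numbers are nonnegative. The last three conditions are the bound on the
maximum, and they force the first one as soon as `λ₁ + λ₂ ≥ 0`.
-/

theorem Matrix.IsHermitian.kronecker {m n R : Type*} [CommMagma R] [StarMul R]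
    {A : Matrix m m R} {B : Matrix n n R} (hA : A.IsHermitian) (hB : B.IsHermitian) :
    (A ⊗ₖ B).IsHermitian := by
  rw [IsHermitian, conjTranspose_kronecker, hA.eq, hB.eq]

theorem isHermitian_σ1 : σ1.IsHermitian := by
  ext i j; fin_cases i <;> fin_cases j <;> simp [σ1]

theorem isHermitian_σ2 : σ2.IsHermitian := by
  ext i j; fin_cases i <;> fin_cases j <;> simp [σ2]

theorem isHermitian_σ3 : σ3.IsHermitian := by
  ext i j; fin_cases i <;> fin_cases j <;> simp [σ3]

noncomputable def pauliCorrelation (l1 l2 l3 : ℝ) : Matrix (Fin 2 × Fin 2) (Fin 2 × Fin 2) ℂ :=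
  (1 : Matrix (Fin 2) (Fin 2) ℂ) ⊗ₖ (1 : Matrix (Fin 2) (Fin 2) ℂ)
    + (l1 : ℂ) • (σ1 ⊗ₖ σ1) - (l2 : ℂ) • (σ2 ⊗ₖ σ2) + (l3 : ℂ) • (σ3 ⊗ₖ σ3)

theorem isHermitian_pauliCorrelation (l1 l2 l3 : ℝ) : (pauliCorrelation l1 l2 l3).IsHermitian :=
  have real_selfAdjoint (l : ℝ) : IsSelfAdjoint (l : ℂ) := Complex.conj_ofReal l
  (((isHermitian_one.kronecker isHermitian_one).add
      ((isHermitian_σ1.kronecker isHermitian_σ1).smul (real_selfAdjoint l1))).sub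
      ((isHermitian_σ2.kronecker isHermitian_σ2).smul (real_selfAdjoint l2))).add
    ((isHermitian_σ3.kronecker isHermitian_σ3).smul (real_selfAdjoint l3))

theorem dotProduct_mulVec_pauliCorrelation (l1 l2 l3 : ℝ) (x : Fin 2 × Fin 2 → ℂ) :
    star x ⬝ᵥ pauliCorrelation l1 l2 l3 *ᵥ x =
      (((1 + l1 + l2 + l3) / 2 * Complex.normSq (x (0, 0) + x (1, 1))
        + (1 - l1 - l2 + l3) / 2 * Complex.normSq (x (0, 0) - x (1, 1))
        + (1 + l1 - l2 - l3) / 2 * Complex.normSq (x (0, 1) + x (1, 0))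
        + (1 - l1 + l2 - l3) / 2 * Complex.normSq (x (0, 1) - x (1, 0)) : ℝ) : ℂ) := by
  push_cast
  simp only [Complex.normSq_eq_conj_mul_self, dotProduct, Pi.star_apply, RCLike.star_def, mulVec,
    pauliCorrelation, zero_mul, implies_true, mul_zero, mul_one, kroneckerMap_one_one, σ1, σ2, σ3,
    Complex.coe_smul,
    Matrix.add_apply, Matrix.sub_apply, Matrix.one_apply, Matrix.smul_apply, kroneckerMap_apply,
    of_apply, cons_val', cons_val_fin_one, Complex.real_smul, Fintype.sum_prod_type,
    Fin.sum_univ_two, Fin.isValue, cons_val_zero, cons_val_one, Prod.mk.injEq, and_true, add_zero,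
    sub_zero, zero_ne_one, and_false, ↓reduceIte, zero_add, mul_neg, sub_neg_eq_add, one_ne_zero,
    neg_mul, Complex.I_mul_I, neg_neg, sub_self, neg_zero, map_add, map_sub]
  ring

theorem posSemidef_pauliCorrelation_iff (l1 l2 l3 : ℝ) :
    (pauliCorrelation l1 l2 l3).PosSemidef ↔
      0 ≤ 1 + l1 + l2 + l3 ∧ 0 ≤ 1 - l1 - l2 + l3 ∧ 0 ≤ 1 + l1 - l2 - l3 ∧
        0 ≤ 1 - l1 + l2 - l3 := by
  simp only [posSemidef_iff_dotProduct_mulVec, isHermitian_pauliCorrelation, true_and,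
    dotProduct_mulVec_pauliCorrelation, Complex.zero_le_real]
  constructor
  · intro h
    have bell (a b c d : ℂ) := h fun p => ![![a, b], ![c, d]] p.1 p.2
    refine ⟨?_, ?_, ?_, ?_⟩
    · linarith [show 0 ≤ (1 + l1 + l2 + l3) / 2 by simpa using bell 1 0 0 1]
    · linarith [show 0 ≤ (1 - l1 - l2 + l3) / 2 by simpa using bell 1 0 0 (-1)]
    · linarith [show 0 ≤ (1 + l1 - l2 - l3) / 2 by simpa using bell 0 1 1 0]
    · linarith [show 0 ≤ (1 - l1 + l2 - l3) / 2 by simpa using bell 0 1 (-1) 0]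
  · rintro ⟨h1, h2, h3, h4⟩ x
    have weighted (c : ℝ) (hc : 0 ≤ c) (z : ℂ) : 0 ≤ c / 2 * Complex.normSq z :=
      mul_nonneg (by linarith) (Complex.normSq_nonneg z)
    exact add_nonneg (add_nonneg (add_nonneg (weighted _ h1 _) (weighted _ h2 _))
      (weighted _ h3 _)) (weighted _ h4 _)

theorem stmt2_general (lam1 lam2 lam3 : ℝ) (h1 : 0 < lam1) (h2 : 0 < lam2) :
    (((1 : Matrix (Fin 2) (Fin 2) ℂ) ⊗ₖ (1 : Matrix (Fin 2) (Fin 2) ℂ))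
      + (lam1 : ℂ) • (σ1 ⊗ₖ σ1)
      - (lam2 : ℂ) • (σ2 ⊗ₖ σ2)
      + (lam3 : ℂ) • (σ3 ⊗ₖ σ3)).PosSemidef
    ↔ max (-lam1 + lam2 + lam3) (max (lam1 - lam2 + lam3) (lam1 + lam2 - lam3)) ≤ 1 := by
  change (pauliCorrelation lam1 lam2 lam3).PosSemidef ↔ _
  rw [posSemidef_pauliCorrelation_iff, max_le_iff, max_le_iff]
  constructor
  · rintro ⟨-, h12, h23, h13⟩
    exact ⟨by linarith, by linarith, by linarith⟩
  · rintro ⟨h23, h13, h12⟩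
    exact ⟨by linarith, by linarith, by linarith, by linarith⟩

/-- for lam1, lam2, lam3 > 0, the matrix
`I⊗I + lam1·(σ1⊗σ1) − lam2·(σ2⊗σ2) + lam3·(σ3⊗σ3)` is PSD iff
max(−lam1+lam2+lam3, lam1−lam2+lam3, lam1+lam2−lam3) ≤ 1. -/
theorem stmt2 (lam1 lam2 lam3 : ℝ) (h1 : 0 < lam1) (h2 : 0 < lam2) (h3 : 0 < lam3) :
    (((1 : Matrix (Fin 2) (Fin 2) ℂ) ⊗ₖ (1 : Matrix (Fin 2) (Fin 2) ℂ))
      + (lam1 : ℂ) • (σ1 ⊗ₖ σ1)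
      - (lam2 : ℂ) • (σ2 ⊗ₖ σ2)
      + (lam3 : ℂ) • (σ3 ⊗ₖ σ3)).PosSemidef
    ↔ max (-lam1 + lam2 + lam3) (max (lam1 - lam2 + lam3) (lam1 + lam2 - lam3)) ≤ 1 :=
  stmt2_general lam1 lam2 lam3 h1 h2
end

section
/- Let κ ∈ (−1, 1), λ1 ∈ [−1, 1], and λ2, λ3 ∈ ℝ; set D := κ²λ1² − 1 (note D < 0), s := κ·(λ1² − 1)/D, and τ := λ1·(κ² − 1)/D. Then the 4×4 complex matrix M := (1/2)(I⊗I) + (s/2)(σ1⊗I) + (τ/2)(σ1⊗σ1) + (λ2/2)(σ2⊗σ2) + (λ3/2)(σ3⊗σ3) is positive semidefinite if and only if both (1 − τ)² ≥ s² + (λ2 + λ3)² and (1 + τ)² ≥ s² + (λ2 − λ3)² hold. -/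
/-!
In the Bell basis the matrix is block diagonal: the span of `e₀₀ + ε e₁₁, e₀₁ + ε e₁₀` is invariant
for `ε = ±1`, and there the matrix acts as a real symmetric `2 × 2` matrix with trace `2(1 + ετ)`
and determinant `(1 + ετ)² - s² - (λ₂ - ελ₃)²`. A Hermitian `2 × 2` matrix is positive
semidefinite iff its trace and determinant are nonnegative, and the trace conditions `1 ± τ ≥ 0`
are automatic because `|τ| ≤ 1`.
-/

open Matrix Kronecker ComplexOrder

theorem Matrix.IsHermitian.posSemidef_iff_trace_nonneg_and_det_nonneg {𝕜 : Type*} [RCLike 𝕜]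
    {A : Matrix (Fin 2) (Fin 2) 𝕜} (hA : A.IsHermitian) :
    A.PosSemidef ↔ 0 ≤ A.trace ∧ 0 ≤ A.det := by
  rw [hA.posSemidef_iff_eigenvalues_nonneg, hA.trace_eq_sum_eigenvalues, hA.det_eq_prod_eigenvalues,
    Fin.sum_univ_two, Fin.prod_univ_two, Pi.le_def, Fin.forall_fin_two]
  norm_cast
  simp only [Pi.zero_apply]
  constructor
  · rintro ⟨h0, h1⟩
    exact ⟨add_nonneg h0 h1, mul_nonneg h0 h1⟩
  · rintro ⟨hsum, hprod⟩
    constructor <;> nlinarith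

theorem Matrix.posSemidef_ofReal_fin_two_iff {𝕜 : Type*} [RCLike 𝕜] (a b c : ℝ) :
    (!![(a : 𝕜), c; c, b]).PosSemidef ↔ 0 ≤ a + b ∧ c ^ 2 ≤ a * b := by
  have hA : (!![(a : 𝕜), c; c, b]).IsHermitian := by
    ext i j; fin_cases i <;> fin_cases j <;> simp
  rw [hA.posSemidef_iff_trace_nonneg_and_det_nonneg, trace_fin_two_of, det_fin_two_of]
  norm_cast
  rw [sub_nonneg, sq]

noncomputable def reverseChoi (s τ lam2 lam3 : ℝ) : Matrix (Fin 2 × Fin 2) (Fin 2 × Fin 2) ℂ :=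
  ((1 : ℝ) / 2 : ℝ) • (((1 : Matrix (Fin 2) (Fin 2) ℂ) ⊗ₖ (1 : Matrix (Fin 2) (Fin 2) ℂ)))
    + ((s / 2 : ℝ) : ℂ) • (σ1 ⊗ₖ (1 : Matrix (Fin 2) (Fin 2) ℂ))
    + ((τ / 2 : ℝ) : ℂ) • (σ1 ⊗ₖ σ1)
    + ((lam2 / 2 : ℝ) : ℂ) • (σ2 ⊗ₖ σ2)
    + ((lam3 / 2 : ℝ) : ℂ) • (σ3 ⊗ₖ σ3)

/-- Rows `e₀₀ + ε e₁₁` and `e₀₁ + ε e₁₀`: for `ε = ±1`, unnormalized Bell vectors. -/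
noncomputable def bellRows (ε : ℝ) : Matrix (Fin 2) (Fin 2 × Fin 2) ℂ :=
  Matrix.of fun i p => if p.1 + p.2 = i then (if p.1 = 0 then 1 else (ε : ℂ)) else 0

noncomputable def bellBlock (ε s τ lam2 lam3 : ℝ) : Matrix (Fin 2) (Fin 2) ℂ :=
  !![((1 + ε * τ - ε * lam2 + lam3 : ℝ) : ℂ), (ε * s : ℝ);
      (ε * s : ℝ), (1 + ε * τ + ε * lam2 - lam3 : ℝ)]

theorem bellRows_mul_reverseChoi_mul {ε : ℝ} (hε : ε = 1 ∨ ε = -1) (s τ lam2 lam3 : ℝ) :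
    bellRows ε * reverseChoi s τ lam2 lam3 * (bellRows ε)ᴴ = bellBlock ε s τ lam2 lam3 := by
  rcases hε with rfl | rfl <;> ext i j <;> fin_cases i <;> fin_cases j <;>
    simp [bellRows, bellBlock, reverseChoi, σ1, σ2, σ3, Matrix.mul_apply, Fintype.sum_prod_type,
      Fin.sum_univ_two] <;> ring

theorem reverseChoi_eq_sum_bellBlock (s τ lam2 lam3 : ℝ) :
    reverseChoi s τ lam2 lam3 = (1 / 4 : ℝ) •
      ((bellRows 1)ᴴ * bellBlock 1 s τ lam2 lam3 * bellRows 1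
        + (bellRows (-1))ᴴ * bellBlock (-1) s τ lam2 lam3 * bellRows (-1)) := by
  ext ⟨i, j⟩ ⟨k, l⟩
  fin_cases i <;> fin_cases j <;> fin_cases k <;> fin_cases l <;>
    simp [bellRows, bellBlock, reverseChoi, σ1, σ2, σ3, Matrix.mul_apply, Fin.sum_univ_two] <;> ring

theorem reverseChoi_posSemidef_iff_bellBlock (s τ lam2 lam3 : ℝ) :
    (reverseChoi s τ lam2 lam3).PosSemidef ↔
      (bellBlock 1 s τ lam2 lam3).PosSemidef ∧ (bellBlock (-1) s τ lam2 lam3).PosSemidef := by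
  constructor
  · intro h
    exact ⟨bellRows_mul_reverseChoi_mul (.inl rfl) s τ lam2 lam3 ▸ h.mul_mul_conjTranspose_same _,
      bellRows_mul_reverseChoi_mul (.inr rfl) s τ lam2 lam3 ▸ h.mul_mul_conjTranspose_same _⟩
  · rintro ⟨hplus, hminus⟩
    rw [reverseChoi_eq_sum_bellBlock]
    exact ((hplus.conjTranspose_mul_mul_same _).add (hminus.conjTranspose_mul_mul_same _)).smul
      (by norm_num)

theorem bellBlock_posSemidef_iff {ε : ℝ} (hε : ε = 1 ∨ ε = -1) (s τ lam2 lam3 : ℝ) :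
    (bellBlock ε s τ lam2 lam3).PosSemidef ↔
      0 ≤ 1 + ε * τ ∧ s ^ 2 + (lam2 - ε * lam3) ^ 2 ≤ (1 + ε * τ) ^ 2 := by
  have hε2 : ε ^ 2 = 1 := by rcases hε with rfl | rfl <;> norm_num
  have hcrit := posSemidef_ofReal_fin_two_iff (𝕜 := ℂ) (1 + ε * τ - ε * lam2 + lam3)
    (1 + ε * τ + ε * lam2 - lam3) (ε * s)
  rw [RCLike.ofReal_eq_complex_ofReal] at hcrit
  have hdet : (1 + ε * τ - ε * lam2 + lam3) * (1 + ε * τ + ε * lam2 - lam3) - (ε * s) ^ 2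
      = (1 + ε * τ) ^ 2 - (s ^ 2 + (lam2 - ε * lam3) ^ 2) := by
    linear_combination (lam3 ^ 2 - lam2 ^ 2 - s ^ 2) * hε2
  rw [bellBlock, hcrit]
  constructor <;> rintro ⟨h₁, h₂⟩ <;> exact ⟨by linarith, by linarith⟩

theorem reverseChoi_posSemidef_iff (s τ lam2 lam3 : ℝ) :
    (reverseChoi s τ lam2 lam3).PosSemidef ↔
      (0 ≤ 1 - τ ∧ s ^ 2 + (lam2 + lam3) ^ 2 ≤ (1 - τ) ^ 2) ∧
        (0 ≤ 1 + τ ∧ s ^ 2 + (lam2 - lam3) ^ 2 ≤ (1 + τ) ^ 2) := by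
  rw [reverseChoi_posSemidef_iff_bellBlock, bellBlock_posSemidef_iff (.inl rfl),
    bellBlock_posSemidef_iff (.inr rfl), and_comm]
  ring_nf

theorem abs_tau_le_one {κ lam1 : ℝ} (hκ : |κ| ≤ 1) (hlam1 : |lam1| ≤ 1) :
    |lam1 * (κ ^ 2 - 1) / (κ ^ 2 * lam1 ^ 2 - 1)| ≤ 1 := by
  have hκ2 : κ ^ 2 ≤ 1 := by simpa using sq_le_one_iff_abs_le_one κ |>.mpr hκ
  have hlam2 : lam1 ^ 2 = |lam1| ^ 2 := (sq_abs lam1).symm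
  rcases (show κ ^ 2 * lam1 ^ 2 - 1 ≤ 0 by nlinarith [abs_nonneg lam1]).eq_or_lt with hD | hD
  · simp [hD]
  rw [abs_div, div_le_one (abs_pos.mpr hD.ne), abs_of_neg hD, abs_mul,
    abs_of_nonpos (sub_nonpos.mpr hκ2)]
  -- `1 - κ²t² - t(1 - κ²) = (1 - t)(1 + κ²t)` for `t = |lam1|`
  nlinarith [mul_nonneg (sub_nonneg.mpr hlam1) (by positivity : 0 ≤ 1 + κ ^ 2 * |lam1|)]

theorem stmt9_general (κ lam1 lam2 lam3 D s τ : ℝ) (hκ : κ ∈ Set.Ioo (-1 : ℝ) 1)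
    (hlam1 : lam1 ∈ Set.Icc (-1 : ℝ) 1)
    (hD : D = κ ^ 2 * lam1 ^ 2 - 1)
    (hτ : τ = lam1 * (κ ^ 2 - 1) / D) :
    (((1 : ℝ) / 2 : ℝ) • (((1 : Matrix (Fin 2) (Fin 2) ℂ) ⊗ₖ (1 : Matrix (Fin 2) (Fin 2) ℂ)))
        + ((s / 2 : ℝ) : ℂ) • (σ1 ⊗ₖ (1 : Matrix (Fin 2) (Fin 2) ℂ))
        + ((τ / 2 : ℝ) : ℂ) • (σ1 ⊗ₖ σ1)
        + ((lam2 / 2 : ℝ) : ℂ) • (σ2 ⊗ₖ σ2)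
        + ((lam3 / 2 : ℝ) : ℂ) • (σ3 ⊗ₖ σ3)).PosSemidef
    ↔ (s ^ 2 + (lam2 + lam3) ^ 2 ≤ (1 - τ) ^ 2 ∧
        s ^ 2 + (lam2 - lam3) ^ 2 ≤ (1 + τ) ^ 2) := by
  have hτ1 : |τ| ≤ 1 := hτ ▸ hD ▸ abs_tau_le_one
    (abs_le.mpr ⟨hκ.1.le, hκ.2.le⟩) (abs_le.mpr hlam1)
  obtain ⟨hτ_ge, hτ_le⟩ := abs_le.mp hτ1
  rw [← reverseChoi, reverseChoi_posSemidef_iff]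
  exact ⟨fun h ↦ ⟨h.1.2, h.2.2⟩, fun h ↦ ⟨⟨by linarith, h.1⟩, ⟨by linarith, h.2⟩⟩⟩

/-- reverse-direction Choi matrix of a Pauli channel, generic case |κ| < 1. -/
theorem stmt9 (κ lam1 lam2 lam3 D s τ : ℝ) (hκ : κ ∈ Set.Ioo (-1 : ℝ) 1)
    (hlam1 : lam1 ∈ Set.Icc (-1 : ℝ) 1)
    (hD : D = κ ^ 2 * lam1 ^ 2 - 1)
    (hs : s = κ * (lam1 ^ 2 - 1) / D)
    (hτ : τ = lam1 * (κ ^ 2 - 1) / D) :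
    (((1 : ℝ) / 2 : ℝ) • (((1 : Matrix (Fin 2) (Fin 2) ℂ) ⊗ₖ (1 : Matrix (Fin 2) (Fin 2) ℂ)))
        + ((s / 2 : ℝ) : ℂ) • (σ1 ⊗ₖ (1 : Matrix (Fin 2) (Fin 2) ℂ))
        + ((τ / 2 : ℝ) : ℂ) • (σ1 ⊗ₖ σ1)
        + ((lam2 / 2 : ℝ) : ℂ) • (σ2 ⊗ₖ σ2)
        + ((lam3 / 2 : ℝ) : ℂ) • (σ3 ⊗ₖ σ3)).PosSemidef
    ↔ (s ^ 2 + (lam2 + lam3) ^ 2 ≤ (1 - τ) ^ 2 ∧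
        s ^ 2 + (lam2 - lam3) ^ 2 ≤ (1 + τ) ^ 2) :=
  stmt9_general κ lam1 lam2 lam3 D s τ hκ hlam1 hD hτ
end

section
/- Assume conditions (A1) and (A3). Let (ρ1, C) be a memoryless sequential strategy and let P denote its generated statistics. Then P satisfies the algebraic consistency condition (C1): for all y1, y2 ∈ 𝒴 and x2 ∈ 𝒳_{y2}, Σ_{x1∈𝒳_{y1}} P(x2|x1,y1,y2) = d·P(x2|0,y2) − d·Σ_{t1,t1'∈𝒯∖{0}} (Σ_{x1} g_{x1|t1}·P(x1|y(t1))) · h_{t1,t1'} · (Σ_{x1'} g_{x1'|t1'}·P(x2|x1',y(t1'),y2)). -/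
open Matrix Kronecker ComplexOrder BigOperators

noncomputable section

/-- The rank-one projection |v⟩⟨v| associated with a vector v ∈ ℂ^d. -/
def outer {d : ℕ} (v : Fin d → ℂ) : Matrix (Fin d) (Fin d) ℂ :=
  Matrix.vecMulVec v (star v)

/-- Partial trace over the first tensor factor. -/
def ptrace1 {d : ℕ} (C : Matrix (Fin d × Fin d) (Fin d × Fin d) ℂ) :
    Matrix (Fin d) (Fin d) ℂ :=
  Matrix.of fun j j' => ∑ i : Fin d, C (i, j) (i, j')

/-- Partial trace over the second tensor factor. -/
def ptrace2 {d : ℕ} (C : Matrix (Fin d × Fin d) (Fin d × Fin d) ℂ) :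
    Matrix (Fin d) (Fin d) ℂ :=
  Matrix.of fun i i' => ∑ j : Fin d, C (i, j) (i', j)

/-- Partial transpose on the first tensor factor. -/
def ptranspose1 {d : ℕ} (C : Matrix (Fin d × Fin d) (Fin d × Fin d) ℂ) :
    Matrix (Fin d × Fin d) (Fin d × Fin d) ℂ :=
  Matrix.of fun p q => C (q.1, p.2) (p.1, q.2)

/-- The channel Λ_C(ρ) := Tr₁[C^{T1}(ρ⊗I)] associated with a Choi matrix C. -/
def chan {d : ℕ} (C : Matrix (Fin d × Fin d) (Fin d × Fin d) ℂ)
    (ρ : Matrix (Fin d) (Fin d) ℂ) : Matrix (Fin d) (Fin d) ℂ :=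
  ptrace1 (ptranspose1 C * (ρ ⊗ₖ (1 : Matrix (Fin d) (Fin d) ℂ)))

/-- The family G_t: G_0 = I and G_{(y,z)} = Σ_x g_{x|y,z}·E_{x|y}. -/
def Gfam {d : ℕ} {Y : Type*} [Fintype Y] (w : Y → Fin d → Fin d → ℂ)
    (g : Y → Fin d → Fin (d - 1) → ℝ) : Option (Y × Fin (d - 1)) → Matrix (Fin d) (Fin d) ℂ
  | none => 1
  | some (y, z) => ∑ x : Fin d, (g y x z : ℂ) • outer (w y x)

/-- The coefficients g_{x|t}, with g_{x|0} := 1. -/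
def gfam {d : ℕ} {Y : Type*} (g : Y → Fin d → Fin (d - 1) → ℝ) :
    Option (Y × Fin (d - 1)) → Fin d → ℝ
  | none, _ => 1
  | some (y, z), x => g y x z

/-- The measurement label y(t), with y(0) replaced by a fixed element y₀. -/
def yOf {d : ℕ} {Y : Type*} (y₀ : Y) : Option (Y × Fin (d - 1)) → Y
  | none => y₀
  | some (y, _) => y

/-- Single-site statistics P(x1|y1) = ⟨x1,y1|ρ1|x1,y1⟩. -/
def P1 {d : ℕ} {Y : Type*} (w : Y → Fin d → Fin d → ℂ) (ρ1 : Matrix (Fin d) (Fin d) ℂ)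
    (x1 : Fin d) (y1 : Y) : ℂ :=
  star (w y1 x1) ⬝ᵥ ρ1.mulVec (w y1 x1)

/-- Two-site statistics P(x2|x1,y1,y2) = ⟨x2,y2|Λ_C(|x1,y1⟩⟨x1,y1|)|x2,y2⟩. -/
def P2 {d : ℕ} {Y : Type*} (w : Y → Fin d → Fin d → ℂ)
    (C : Matrix (Fin d × Fin d) (Fin d × Fin d) ℂ)
    (x2 : Fin d) (y2 : Y) (x1 : Fin d) (y1 : Y) : ℂ :=
  star (w y2 x2) ⬝ᵥ (chan C (outer (w y1 x1))).mulVec (w y2 x2)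

/-- Statistics with trivial first measurement: P(x2|0,y2) = ⟨x2,y2|Λ_C(ρ1)|x2,y2⟩. -/
def P20 {d : ℕ} {Y : Type*} (w : Y → Fin d → Fin d → ℂ)
    (ρ1 : Matrix (Fin d) (Fin d) ℂ) (C : Matrix (Fin d × Fin d) (Fin d × Fin d) ℂ)
    (x2 : Fin d) (y2 : Y) : ℂ :=
  star (w y2 x2) ⬝ᵥ (chan C ρ1).mulVec (w y2 x2)

/-- The reconstructed Choi matrix Ĉ[P] built from abstract statistics
(p1, p2, p20), the coefficients g, the dual basis H, and a fixed label y₀. -/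
def ChatP {d : ℕ} {Y : Type*} [Fintype Y] [DecidableEq Y] (y₀ : Y)
    (g : Y → Fin d → Fin (d - 1) → ℝ)
    (H : Option (Y × Fin (d - 1)) → Matrix (Fin d) (Fin d) ℂ)
    (p1 : Fin d → Y → ℂ)
    (p2 : Fin d → Y → Fin d → Y → ℂ)
    (p20 : Fin d → Y → ℂ) : Matrix (Fin d × Fin d) (Fin d × Fin d) ℂ :=
  (∑ t1 : Y × Fin (d - 1), ∑ t2 : Option (Y × Fin (d - 1)),
      (∑ x1 : Fin d, ∑ x2 : Fin d,
          (g t1.1 x1 t1.2 : ℂ) * (gfam g t2 x2 : ℂ) * p2 x2 (yOf y₀ t2) x1 t1.1)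
        • ((H (some t1)).transpose ⊗ₖ H t2))
  + (∑ t2 : Option (Y × Fin (d - 1)),
      ((∑ x2 : Fin d, (gfam g t2 x2 : ℂ) * p20 x2 (yOf y₀ t2))
        - ∑ t1 : Y × Fin (d - 1), ∑ t1' : Y × Fin (d - 1),
            (∑ x1 : Fin d, (g t1.1 x1 t1.2 : ℂ) * p1 x1 t1.1)
              * (H (some t1) * H (some t1')).trace
              * (∑ x1' : Fin d, ∑ x2 : Fin d,
                  (g t1'.1 x1' t1'.2 : ℂ) * (gfam g t2 x2 : ℂ) * p2 x2 (yOf y₀ t2) x1' t1'.1))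
        • ((1 : Matrix (Fin d) (Fin d) ℂ) ⊗ₖ H t2))

end


noncomputable section Aux

lemma trace_mul_outer {d : ℕ} (M : Matrix (Fin d) (Fin d) ℂ) (v : Fin d → ℂ) :
    (M * outer v).trace = star v ⬝ᵥ M.mulVec v := by
  simp [Matrix.trace, Matrix.mul_apply, outer, vecMulVec, dotProduct, mulVec, Matrix.diag,
    Finset.mul_sum, Finset.sum_mul]
  apply Finset.sum_congr rfl; intro i _
  apply Finset.sum_congr rfl; intro j _
  ring

lemma sum_outer {d : ℕ} {Y : Type*} (w : Y → Fin d → Fin d → ℂ) (y : Y)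
    (horth : ∀ y (x x' : Fin d), star (w y x) ⬝ᵥ w y x' = if x = x' then 1 else 0) :
    ∑ x : Fin d, outer (w y x) = 1 := by
  have h1 : (Matrix.of fun x i => star (w y x i)) * (Matrix.of fun i x => w y x i) = 1 := by
    ext x x'
    simpa [Matrix.mul_apply, dotProduct, Matrix.one_apply] using horth y x x'
  have h2 := mul_eq_one_comm.mp h1
  ext i j
  have := congrFun (congrFun h2 i) j
  simpa [Matrix.mul_apply, outer, vecMulVec, Matrix.sum_apply, mul_comm] using this

def Fmat {d : ℕ} (C : Matrix (Fin d × Fin d) (Fin d × Fin d) ℂ) (v : Fin d → ℂ) :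
    Matrix (Fin d) (Fin d) ℂ :=
  Matrix.of fun i k => ∑ j : Fin d, ∑ j' : Fin d,
    (starRingEnd ℂ) (v j) * v j' * C (k, j) (i, j')

lemma chan_apply {d : ℕ} (C : Matrix (Fin d × Fin d) (Fin d × Fin d) ℂ)
    (M : Matrix (Fin d) (Fin d) ℂ) (j j' : Fin d) :
    chan C M j j' = ∑ i : Fin d, ∑ k : Fin d, C (k, j) (i, j') * M k i := by
  simp only [chan, ptrace1, ptranspose1, Matrix.of_apply, Matrix.mul_apply,
    Matrix.kroneckerMap_apply, Fintype.sum_prod_type, Matrix.one_apply, mul_ite, mul_one, mul_zero,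
    Finset.sum_ite_eq', Finset.mem_univ, if_true]

lemma sum4_comm {d : ℕ} (f : Fin d → Fin d → Fin d → Fin d → ℂ) :
    ∑ j : Fin d, ∑ j' : Fin d, ∑ i : Fin d, ∑ k : Fin d, f j j' i k
      = ∑ i : Fin d, ∑ k : Fin d, ∑ j : Fin d, ∑ j' : Fin d, f j j' i k := by
  have e1 : ∀ j : Fin d, (∑ j' : Fin d, ∑ i : Fin d, ∑ k : Fin d, f j j' i k)
      = ∑ i : Fin d, ∑ j' : Fin d, ∑ k : Fin d, f j j' i k := fun j => Finset.sum_comm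
  simp_rw [e1]
  rw [Finset.sum_comm]
  refine Finset.sum_congr rfl fun i _ => ?_
  have e2 : ∀ j : Fin d, (∑ j' : Fin d, ∑ k : Fin d, f j j' i k)
      = ∑ k : Fin d, ∑ j' : Fin d, f j j' i k := fun j => Finset.sum_comm
  simp_rw [e2]
  exact Finset.sum_comm

lemma f_eq {d : ℕ} (C : Matrix (Fin d × Fin d) (Fin d × Fin d) ℂ)
    (v : Fin d → ℂ) (M : Matrix (Fin d) (Fin d) ℂ) :
    star v ⬝ᵥ (chan C M).mulVec v = (Fmat C v * M).trace := by
  simp only [dotProduct, mulVec, Matrix.trace, Matrix.diag, Matrix.mul_apply, Fmat,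
    Matrix.of_apply, chan_apply, Pi.star_apply, Finset.mul_sum, Finset.sum_mul]
  rw [sum4_comm]
  refine Finset.sum_congr rfl fun i _ => Finset.sum_congr rfl fun k _ =>
    Finset.sum_congr rfl fun j _ => Finset.sum_congr rfl fun j' _ => ?_
  rw [starRingEnd_apply]
  ring

lemma Fmat_herm {d : ℕ} (C : Matrix (Fin d × Fin d) (Fin d × Fin d) ℂ)
    (hC : C.IsHermitian) (v : Fin d → ℂ) : (Fmat C v).IsHermitian := by
  rw [Matrix.IsHermitian]
  ext i k
  simp only [Fmat, Matrix.conjTranspose_apply, Matrix.of_apply, star_sum, star_mul',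
    RingHom.id_apply, starRingEnd_self_apply]
  rw [Finset.sum_comm]
  apply Finset.sum_congr rfl; intro j _
  apply Finset.sum_congr rfl; intro j' _
  have h := congrFun (congrFun hC (k, j)) (i, j')
  rw [Matrix.conjTranspose_apply] at h
  simp only [starRingEnd_apply, star_star]
  rw [h]
  ring

end Aux

/-- under (A1) and (A3), the statistics generated by a memoryless sequential
strategy (ρ1, C) satisfy the algebraic consistency condition (C1). -/
theorem stmt17 {d : ℕ} (hd : 2 ≤ d) {Y : Type*} [Fintype Y] [DecidableEq Y] (y₀ : Y)
    (w : Y → Fin d → Fin d → ℂ)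
    (g : Y → Fin d → Fin (d - 1) → ℝ)
    (H : Option (Y × Fin (d - 1)) → Matrix (Fin d) (Fin d) ℂ)
    -- (A3): each {|x,y⟩ : x} is an orthonormal basis of ℂ^d, so each E_{x|y} is rank one
    (horth : ∀ y (x x' : Fin d), star (w y x) ⬝ᵥ w y x' = if x = x' then 1 else 0)
    -- each G_{y,z} is traceless
    (htraceless : ∀ y z, (Gfam w g (some (y, z))).trace = 0)
    -- (A1): {I} ∪ {G_{y,z}} is a basis of Herm(d), with dual basis H (Hermitian),
    -- expressed via the trace-duality and expansion properties
    (hH : ∀ t, (H t).IsHermitian)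
    (hdual : ∀ t t', (Gfam w g t' * H t).trace = if t = t' then 1 else 0)
    (hcomplete : ∀ M : Matrix (Fin d) (Fin d) ℂ, M.IsHermitian →
      M = ∑ t : Option (Y × Fin (d - 1)), (Gfam w g t * M).trace • H t)
    -- the memoryless sequential strategy (ρ1, C)
    (ρ1 : Matrix (Fin d) (Fin d) ℂ) (hρ1 : ρ1.PosSemidef) (hρ1tr : ρ1.trace = 1)
    (C : Matrix (Fin d × Fin d) (Fin d × Fin d) ℂ) (hC : C.PosSemidef)
    (hCTP : ptrace2 C = 1) :
    ∀ (y1 y2 : Y) (x2 : Fin d),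
      ∑ x1 : Fin d, P2 w C x2 y2 x1 y1
        = (d : ℂ) * P20 w ρ1 C x2 y2
          - (d : ℂ) *
            ∑ t1 : Y × Fin (d - 1), ∑ t1' : Y × Fin (d - 1),
              (∑ x1 : Fin d, (g t1.1 x1 t1.2 : ℂ) * P1 w ρ1 x1 t1.1)
                * (H (some t1) * H (some t1')).trace
                * (∑ x1' : Fin d, (g t1'.1 x1' t1'.2 : ℂ) * P2 w C x2 y2 x1' t1'.1) := by
  intro y1 y2 x2
  set v : Fin d → ℂ := w y2 x2 with hv
  set F : Matrix (Fin d) (Fin d) ℂ := Fmat C v with hFdef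
  have hdne : (d : ℂ) ≠ 0 := by
    exact Nat.cast_ne_zero.mpr (by omega)
  -- rewrite statistics as traces against F
  have hP2 : ∀ (x1 : Fin d) (y : Y), P2 w C x2 y2 x1 y = (F * outer (w y x1)).trace :=
    fun x1 y => f_eq C v _
  have hP20 : P20 w ρ1 C x2 y2 = (F * ρ1).trace := f_eq C v _
  have hP1 : ∀ (x1 : Fin d) (y : Y), P1 w ρ1 x1 y = (ρ1 * outer (w y x1)).trace :=
    fun x1 y => (trace_mul_outer ρ1 (w y x1)).symm
  -- trace of F against G
  have hFG : ∀ t1' : Y × Fin (d - 1), (F * Gfam w g (some t1')).trace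
      = ∑ x1' : Fin d, (g t1'.1 x1' t1'.2 : ℂ) * P2 w C x2 y2 x1' t1'.1 := by
    rintro ⟨ty, tz⟩
    rw [show Gfam w g (some (ty, tz)) = ∑ x : Fin d, (g ty x tz : ℂ) • outer (w ty x) from rfl]
    rw [Matrix.mul_sum, Matrix.trace_sum]
    refine Finset.sum_congr rfl fun x _ => ?_
    rw [Matrix.mul_smul, Matrix.trace_smul, hP2, smul_eq_mul]
  -- trace of G against ρ1
  have hGρ : ∀ t1 : Y × Fin (d - 1), (Gfam w g (some t1) * ρ1).trace
      = ∑ x1 : Fin d, (g t1.1 x1 t1.2 : ℂ) * P1 w ρ1 x1 t1.1 := by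
    rintro ⟨ty, tz⟩
    rw [Matrix.trace_mul_comm]
    rw [show Gfam w g (some (ty, tz)) = ∑ x : Fin d, (g ty x tz : ℂ) • outer (w ty x) from rfl]
    rw [Matrix.mul_sum, Matrix.trace_sum]
    refine Finset.sum_congr rfl fun x _ => ?_
    rw [Matrix.mul_smul, Matrix.trace_smul, hP1, smul_eq_mul]
  -- identity is d • H none
  have hone : (1 : Matrix (Fin d) (Fin d) ℂ) = (d : ℂ) • H none := by
    have h := hcomplete 1 Matrix.isHermitian_one
    rw [Fintype.sum_option] at h
    have h0 : ∀ a : Y × Fin (d - 1), (Gfam w g (some a) * 1).trace = 0 := by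
      rintro ⟨ty, tz⟩
      rw [mul_one]
      exact htraceless ty tz
    simp only [h0, zero_smul, Finset.sum_const_zero, add_zero] at h
    rw [show Gfam w g (none : Option (Y × Fin (d - 1))) = 1 from rfl, mul_one,
      Matrix.trace_one] at h
    simpa using h
  -- expansion of ρ1
  have hHnone : H none = ρ1 - ∑ t1 : Y × Fin (d - 1),
      ((Gfam w g (some t1) * ρ1).trace) • H (some t1) := by
    have h := hcomplete ρ1 hρ1.1
    rw [Fintype.sum_option] at h
    rw [show Gfam w g (none : Option (Y × Fin (d - 1))) = 1 from rfl, one_mul, hρ1tr,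
      one_smul] at h
    exact (eq_sub_of_add_eq h.symm)
  -- trace of H none against H (some t1) vanishes
  have htrHn : ∀ t1 : Y × Fin (d - 1), (H none * H (some t1)).trace = 0 := by
    intro t1
    have h0 : (H (some t1)).trace = 0 := by
      have h := hdual (some t1) none
      rw [show Gfam w g (none : Option (Y × Fin (d - 1))) = 1 from rfl, one_mul] at h
      simpa using h
    have h1 : (d : ℂ) * (H none * H (some t1)).trace = 0 := by
      rw [← smul_eq_mul, ← Matrix.trace_smul, ← smul_mul_assoc, ← hone, one_mul, h0]
    exact (mul_eq_zero.mp h1).resolve_left hdne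
  -- expansion of F
  have hF : F = ∑ t : Option (Y × Fin (d - 1)), ((Gfam w g t * F).trace) • H t :=
    hcomplete F (Fmat_herm C hC.1 v)
  -- trace of F against H (some t1)
  have hFH : ∀ t1 : Y × Fin (d - 1), (F * H (some t1)).trace
      = ∑ t1' : Y × Fin (d - 1),
          (F * Gfam w g (some t1')).trace * (H (some t1) * H (some t1')).trace := by
    intro t1
    conv_lhs => rw [hF]
    rw [Finset.sum_mul, Matrix.trace_sum, Fintype.sum_option]
    simp only [smul_mul_assoc, Matrix.trace_smul, smul_eq_mul]
    rw [htrHn t1, mul_zero, zero_add]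
    refine Finset.sum_congr rfl fun t1' _ => ?_
    rw [Matrix.trace_mul_comm (H (some t1')) (H (some t1)),
      Matrix.trace_mul_comm (Gfam w g (some t1')) F]
  -- main computation
  have hLHS : ∑ x1 : Fin d, P2 w C x2 y2 x1 y1 = (F * (1 : Matrix (Fin d) (Fin d) ℂ)).trace := by
    rw [← sum_outer w y1 horth, Matrix.mul_sum, Matrix.trace_sum]
    exact Finset.sum_congr rfl fun x1 _ => hP2 x1 y1
  rw [hLHS, hone, Matrix.mul_smul, Matrix.trace_smul, smul_eq_mul, hHnone, Matrix.mul_sub,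
    Matrix.trace_sub, Matrix.mul_sum, Matrix.trace_sum, hP20, mul_sub]
  congr 1
  rw [Finset.mul_sum, Finset.mul_sum]
  refine Finset.sum_congr rfl fun t1 _ => ?_
  rw [Matrix.mul_smul, Matrix.trace_smul, smul_eq_mul, hFH t1, hGρ t1]
  rw [Finset.mul_sum, Finset.mul_sum, Finset.mul_sum]
  refine Finset.sum_congr rfl fun t1' _ => ?_
  rw [hFG t1']
  ring
end

section
/- Assume conditions (A1) and (A3). Let Q be an observed family of distributions satisfying the Markov condition X1−Y1−Y2, condition (C0), and condition (C1). Then for all y1, y2 ∈ 𝒴, x1 ∈ 𝒳_{y1}, and x2 ∈ 𝒳_{y2}: P(x1|y1) = Tr(E_{x1|y1}·ρ1[P]) and P(x2|x1,y1,y2) = Tr((E_{x1|y1} ⊗ E_{x2|y2})·(Ĉ[P])^{T1}). Consequently Q(x1,x2|y1,y2) = Tr(E_{x1|y1}·ρ1[P]) · Tr((E_{x1|y1} ⊗ E_{x2|y2})·(Ĉ[P])^{T1}), i.e., the observed distribution is exactly reproduced by the reconstructed pair (ρ1[P], Ĉ[P]). -/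
open Matrix Kronecker ComplexOrder BigOperators

noncomputable section

/-- Outcome spaces: 𝒳_0 = {0} is a singleton for the trivial measurement, and
𝒳_y = Fin d for y ∈ 𝒴. -/
def XSp (d : ℕ) (Y : Type*) : Option Y → Type
  | none => PUnit
  | some _ => Fin d

instance {d : ℕ} {Y : Type*} : ∀ o : Option Y, Fintype (XSp d Y o)
  | none => inferInstanceAs (Fintype PUnit)
  | some _ => inferInstanceAs (Fintype (Fin d))

/-- The marginal m(x1|y1), computed with the trivial second measurement. -/
def marg {d : ℕ} {Y : Type*} (Q : ∀ y1 y2 : Option Y, XSp d Y y1 → XSp d Y y2 → ℝ)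
    (y1 : Option Y) (x1 : XSp d Y y1) : ℝ :=
  ∑ x2 : XSp d Y none, Q y1 none x1 x2

/-- The reconstructed state ρ1[P] := Σ_t c_t·H_t, with c_0 = 1 and
c_{(y,z)} = Σ_{x1} g_{x1|y,z}·P(x1|y). -/
def rho1P {d : ℕ} {Y : Type*} [Fintype Y]
    (g : Y → Fin d → Fin (d - 1) → ℝ)
    (H : Option (Y × Fin (d - 1)) → Matrix (Fin d) (Fin d) ℂ)
    (p1 : Fin d → Y → ℝ) : Matrix (Fin d) (Fin d) ℂ :=
  H none + ∑ t : Y × Fin (d - 1),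
    ((∑ x1 : Fin d, g t.1 x1 t.2 * p1 x1 t.1 : ℝ) : ℂ) • H (some t)

end

/-! A distribution `p` on the outcomes of the measurement `y` is determined by its moments
`∑ x, p x` and `∑ x, g y x z * p x`: the `d` vectors `(1, g_{·|y,z})` are linearly independent,
being mapped onto the family `(I, G_{y,z})`, which has the dual family `H`. Consequently
`Tr (E_{x|y} ∑ t, φ t • H t) = p x` whenever `φ 0` and `φ (y, z)` are these moments, and this is
the first identity. For the second, contracting `Ĉ[P]^{T1}` with `E_{x2|y2}` reconstructs in
every `H_{t1}` coefficient the moment of `P(x2|·, y(t1), y2)`; condition (C1) together with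
`H_0 = I / d` makes the remaining `I ⊗ H_t` part supply the missing moment `∑ x1, P(x2|x1,y1,y2)`,
so that the contraction with `E_{x1|y1}` returns `P(x2|x1,y1,y2)`. The third identity is the
product of the first two. -/

open Finset

theorem sum_outer_eq_one_of_orthonormal {d : ℕ} (w : Fin d → Fin d → ℂ)
    (horth : ∀ x x', star (w x) ⬝ᵥ w x' = if x = x' then 1 else 0) :
    ∑ x, outer (w x) = 1 := by
  set U : Matrix (Fin d) (Fin d) ℂ := Matrix.of fun x i => star (w x i)
  have hrows : U * Uᴴ = 1 := by
    ext x x'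
    simpa [U, Matrix.mul_apply, Matrix.one_apply, dotProduct] using horth x x'
  have hcols : Uᴴ * U = 1 := mul_eq_one_comm.mp hrows
  ext i j
  simpa [U, outer, Matrix.mul_apply, Matrix.sum_apply, Matrix.vecMulVec_apply] using
    congrFun (congrFun hcols i) j

theorem trace_outer_of_orthonormal {d : ℕ} (w : Fin d → Fin d → ℂ)
    (horth : ∀ x x', star (w x) ⬝ᵥ w x' = if x = x' then 1 else 0) (x : Fin d) :
    (outer (w x)).trace = 1 := by
  rw [outer, trace_vecMulVec, dotProduct_comm, horth, if_pos rfl]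

theorem trace_mul_sum_smul {R n ι : Type*} [CommSemiring R] [Fintype n] [Fintype ι]
    (A : Matrix n n R) (φ : ι → R) (H : ι → Matrix n n R) :
    (A * ∑ t, φ t • H t).trace = ∑ t, φ t * (A * H t).trace := by
  simp [Matrix.mul_sum, Matrix.trace_sum]

theorem trace_kronecker_mul_kronecker {R m n : Type*} [CommSemiring R] [Fintype m] [Fintype n]
    (A M : Matrix m m R) (B N : Matrix n n R) :
    ((A ⊗ₖ B) * (M ⊗ₖ N)).trace = (A * M).trace * (B * N).trace := by
  rw [← mul_kronecker_mul, trace_kronecker]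

theorem linearIndependent_of_trace_mul_eq_ite {R n ι : Type*} [CommRing R] [Fintype n]
    [Fintype ι] [DecidableEq ι] {G H : ι → Matrix n n R}
    (hdual : ∀ i j, (G j * H i).trace = if i = j then 1 else 0) :
    LinearIndependent R G := by
  refine Fintype.linearIndependent_iff.mpr fun l hl i => ?_
  simpa [Matrix.sum_mul, Matrix.trace_sum, hdual] using congrArg (fun M => (M * H i).trace) hl

theorem eq_of_forall_dotProduct_eq {K n ι : Type*} [Field K] [Fintype n] [Fintype ι]
    {u : ι → n → K} (hu : LinearIndependent K u) (hcard : Fintype.card ι = Fintype.card n)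
    {a b : n → K} (h : ∀ i, u i ⬝ᵥ a = u i ⬝ᵥ b) : a = b := by
  have hspan := hu.span_eq_top_of_card_eq_finrank' (by simpa using hcard)
  have hzero : dotProductBilin K K (a - b) = 0 :=
    LinearMap.ext_on_range hspan fun i => by simp [dotProduct_comm _ (u i), h i]
  exact sub_eq_zero.mp (dotProduct_eq_zero_iff.mp fun v => LinearMap.congr_fun hzero v)

section PartialTranspose

variable {d : ℕ}

theorem ptranspose1_add (C D : Matrix (Fin d × Fin d) (Fin d × Fin d) ℂ) :
    ptranspose1 (C + D) = ptranspose1 C + ptranspose1 D := by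
  ext; simp [ptranspose1]

theorem ptranspose1_smul (c : ℂ) (C : Matrix (Fin d × Fin d) (Fin d × Fin d) ℂ) :
    ptranspose1 (c • C) = c • ptranspose1 C := by
  ext; simp [ptranspose1]

theorem ptranspose1_sum {ι : Type*} (s : Finset ι)
    (C : ι → Matrix (Fin d × Fin d) (Fin d × Fin d) ℂ) :
    ptranspose1 (∑ i ∈ s, C i) = ∑ i ∈ s, ptranspose1 (C i) := by
  ext; simp [ptranspose1, Matrix.sum_apply]

theorem ptranspose1_transpose_kronecker (M N : Matrix (Fin d) (Fin d) ℂ) :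
    ptranspose1 (Mᵀ ⊗ₖ N) = M ⊗ₖ N := by
  ext; simp [ptranspose1]

theorem ptranspose1_one_kronecker (N : Matrix (Fin d) (Fin d) ℂ) :
    ptranspose1 (1 ⊗ₖ N) = 1 ⊗ₖ N := by
  simpa using ptranspose1_transpose_kronecker 1 N

end PartialTranspose

section Reconstruction

variable {d : ℕ} {Y : Type*}

def gMoment (y₀ : Y) (g : Y → Fin d → Fin (d - 1) → ℝ) (f : Fin d → Y → ℂ)
    (t : Option (Y × Fin (d - 1))) : ℂ :=
  ∑ x, (gfam g t x : ℂ) * f x (yOf y₀ t)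

def chatCoeff (y₀ : Y) (g : Y → Fin d → Fin (d - 1) → ℝ) (p2 : Fin d → Y → Fin d → Y → ℂ)
    (t1 : Y × Fin (d - 1)) (t2 : Option (Y × Fin (d - 1))) : ℂ :=
  ∑ x1 : Fin d, ∑ x2 : Fin d,
    (g t1.1 x1 t1.2 : ℂ) * (gfam g t2 x2 : ℂ) * p2 x2 (yOf y₀ t2) x1 t1.1

variable [Fintype Y]

def chatIdCoeff (y₀ : Y) (g : Y → Fin d → Fin (d - 1) → ℝ)
    (H : Option (Y × Fin (d - 1)) → Matrix (Fin d) (Fin d) ℂ)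
    (p1 : Fin d → Y → ℂ) (p2 : Fin d → Y → Fin d → Y → ℂ) (p20 : Fin d → Y → ℂ)
    (t2 : Option (Y × Fin (d - 1))) : ℂ :=
  gMoment y₀ g p20 t2 - ∑ t1 : Y × Fin (d - 1), ∑ t1' : Y × Fin (d - 1),
    gMoment y₀ g p1 (some t1) * (H (some t1) * H (some t1')).trace * chatCoeff y₀ g p2 t1' t2

variable {w : Y → Fin d → Fin d → ℂ} {g : Y → Fin d → Fin (d - 1) → ℝ}
  {H : Option (Y × Fin (d - 1)) → Matrix (Fin d) (Fin d) ℂ}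

theorem Gfam_map_mk_eq_sum
    (horth : ∀ y (x x' : Fin d), star (w y x) ⬝ᵥ w y x' = if x = x' then 1 else 0)
    (y : Y) (s : Option (Fin (d - 1))) :
    Gfam w g (s.map (Prod.mk y)) = ∑ x, (gfam g (s.map (Prod.mk y)) x : ℂ) • outer (w y x) := by
  cases s with
  | none => simpa [gfam, Gfam] using (sum_outer_eq_one_of_orthonormal (w y) (horth y)).symm
  | some z => rfl

theorem H_none_eq [NeZero d] (htraceless : ∀ y z, (Gfam w g (some (y, z))).trace = 0)
    (hcomplete : ∀ M : Matrix (Fin d) (Fin d) ℂ, M.IsHermitian →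
      M = ∑ t : Option (Y × Fin (d - 1)), (Gfam w g t * M).trace • H t) :
    H none = (d : ℂ)⁻¹ • 1 := by
  have hherm : ((d : ℂ)⁻¹ • (1 : Matrix (Fin d) (Fin d) ℂ)).IsHermitian := by
    simp [Matrix.IsHermitian, Matrix.conjTranspose_smul]
  rw [hcomplete _ hherm, Fintype.sum_option]
  simp_rw [Matrix.mul_smul, Matrix.mul_one, Matrix.trace_smul, htraceless]
  simp [Gfam]

variable [DecidableEq Y]

theorem trace_Gfam_mul_sum_smul
    (hdual : ∀ t t', (Gfam w g t' * H t).trace = if t = t' then 1 else 0)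
    (φ : Option (Y × Fin (d - 1)) → ℂ) (t' : Option (Y × Fin (d - 1))) :
    (Gfam w g t' * ∑ t, φ t • H t).trace = φ t' := by
  simp_rw [trace_mul_sum_smul, hdual, mul_ite, mul_one, mul_zero, sum_ite_eq', mem_univ, if_true]

theorem linearIndependent_gfam_map_mk
    (horth : ∀ y (x x' : Fin d), star (w y x) ⬝ᵥ w y x' = if x = x' then 1 else 0)
    (hdual : ∀ t t', (Gfam w g t' * H t).trace = if t = t' then 1 else 0) (y : Y) :
    LinearIndependent ℂ fun (s : Option (Fin (d - 1))) (x : Fin d) =>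
      (gfam g (s.map (Prod.mk y)) x : ℂ) := by
  let L : (Fin d → ℂ) →ₗ[ℂ] Matrix (Fin d) (Fin d) ℂ :=
    { toFun := fun c => ∑ x, c x • outer (w y x)
      map_add' := fun c c' => by simp [add_smul, sum_add_distrib]
      map_smul' := fun r c => by simp [smul_sum, smul_smul] }
  refine LinearIndependent.of_comp L ?_
  have hcomp : L ∘ (fun s x => (gfam g (s.map (Prod.mk y)) x : ℂ)) =
      Gfam w g ∘ Option.map (Prod.mk y) :=
    funext fun s => (Gfam_map_mk_eq_sum horth y s).symm
  rw [hcomp]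
  exact (linearIndependent_of_trace_mul_eq_ite hdual).comp _
    (Option.map_injective (Prod.mk_right_injective y))

theorem sum_mul_trace_outer_mul_eq_of_moments
    (horth : ∀ y (x x' : Fin d), star (w y x) ⬝ᵥ w y x' = if x = x' then 1 else 0)
    (hdual : ∀ t t', (Gfam w g t' * H t).trace = if t = t' then 1 else 0)
    {y : Y} {φ : Option (Y × Fin (d - 1)) → ℂ} {p : Fin d → ℂ}
    (h0 : φ none = ∑ x, p x) (hz : ∀ z, φ (some (y, z)) = ∑ x, (g y x z : ℂ) * p x)
    (x : Fin d) :
    ∑ t, φ t * (outer (w y x) * H t).trace = p x := by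
  have hcard : Fintype.card (Option (Fin (d - 1))) = Fintype.card (Fin d) := by
    simp only [Fintype.card_option, Fintype.card_fin]
    have := x.pos
    omega
  suffices h : (fun x => (outer (w y x) * ∑ t, φ t • H t).trace) = p by
    rw [← trace_mul_sum_smul, ← h]
  refine eq_of_forall_dotProduct_eq (linearIndependent_gfam_map_mk horth hdual y) hcard
    fun s => ?_
  have hmoment : (fun x => (gfam g (s.map (Prod.mk y)) x : ℂ)) ⬝ᵥ
      (fun x => (outer (w y x) * ∑ t, φ t • H t).trace) = φ (s.map (Prod.mk y)) := by
    rw [← trace_Gfam_mul_sum_smul hdual φ, Gfam_map_mk_eq_sum horth]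
    simp [dotProduct, Matrix.sum_mul, Matrix.trace_sum]
  rw [hmoment]
  cases s with
  | none => simp [h0, gfam, dotProduct]
  | some z => simp [hz, gfam, dotProduct]

theorem sum_gMoment_mul_trace_outer_mul
    (horth : ∀ y (x x' : Fin d), star (w y x) ⬝ᵥ w y x' = if x = x' then 1 else 0)
    (hdual : ∀ t t', (Gfam w g t' * H t).trace = if t = t' then 1 else 0)
    (y₀ : Y) {f : Fin d → Y → ℂ} (hf : ∀ y y', ∑ x, f x y = ∑ x, f x y') (y : Y) (x : Fin d) :
    ∑ t, gMoment y₀ g f t * (outer (w y x) * H t).trace = f x y :=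
  sum_mul_trace_outer_mul_eq_of_moments horth hdual (p := fun x => f x y)
    (by simp [gMoment, gfam, yOf, hf y₀ y]) (fun _ => rfl) x

theorem trace_outer_mul_rho1P
    (horth : ∀ y (x x' : Fin d), star (w y x) ⬝ᵥ w y x' = if x = x' then 1 else 0)
    (hdual : ∀ t t', (Gfam w g t' * H t).trace = if t = t' then 1 else 0)
    {p1 : Fin d → Y → ℝ} (hp1 : ∀ y, ∑ x, p1 x y = 1) (y : Y) (x : Fin d) :
    (outer (w y x) * rho1P g H p1).trace = p1 x y := by
  have hrho : rho1P g H p1 =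
      ∑ t, (t.elim 1 fun t => ((∑ x, g t.1 x t.2 * p1 x t.1 : ℝ) : ℂ)) • H t := by
    simp [rho1P, Fintype.sum_option]
  rw [hrho, trace_mul_sum_smul]
  exact sum_mul_trace_outer_mul_eq_of_moments horth hdual (p := fun x => (p1 x y : ℂ))
    (by simp [← Complex.ofReal_sum, hp1]) (fun z => by push_cast; rfl) x

theorem ChatP_eq (y₀ : Y) (g : Y → Fin d → Fin (d - 1) → ℝ)
    (H : Option (Y × Fin (d - 1)) → Matrix (Fin d) (Fin d) ℂ)
    (p1 : Fin d → Y → ℂ) (p2 : Fin d → Y → Fin d → Y → ℂ) (p20 : Fin d → Y → ℂ) :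
    ChatP y₀ g H p1 p2 p20 =
      (∑ t1, ∑ t2, chatCoeff y₀ g p2 t1 t2 • ((H (some t1))ᵀ ⊗ₖ H t2)) +
        ∑ t2, chatIdCoeff y₀ g H p1 p2 p20 t2 • (1 ⊗ₖ H t2) :=
  rfl

theorem trace_kronecker_mul_ptranspose1_ChatP (y₀ : Y) (g : Y → Fin d → Fin (d - 1) → ℝ)
    (H : Option (Y × Fin (d - 1)) → Matrix (Fin d) (Fin d) ℂ)
    (p1 : Fin d → Y → ℂ) (p2 : Fin d → Y → Fin d → Y → ℂ) (p20 : Fin d → Y → ℂ)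
    (A B : Matrix (Fin d) (Fin d) ℂ) :
    ((A ⊗ₖ B) * ptranspose1 (ChatP y₀ g H p1 p2 p20)).trace =
      (∑ t1, ∑ t2, chatCoeff y₀ g p2 t1 t2 * ((A * H (some t1)).trace * (B * H t2).trace)) +
        ∑ t2, chatIdCoeff y₀ g H p1 p2 p20 t2 * (A.trace * (B * H t2).trace) := by
  simp only [ChatP_eq, ptranspose1_add, ptranspose1_sum, ptranspose1_smul,
    ptranspose1_transpose_kronecker, ptranspose1_one_kronecker, Matrix.mul_add, Matrix.mul_sum,
    Matrix.mul_smul, Matrix.trace_add, Matrix.trace_sum, Matrix.trace_smul, smul_eq_mul,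
    trace_kronecker_mul_kronecker, Matrix.mul_one]
theorem sum_chatCoeff_mul_trace_outer_mul
    (horth : ∀ y (x x' : Fin d), star (w y x) ⬝ᵥ w y x' = if x = x' then 1 else 0)
    (hdual : ∀ t t', (Gfam w g t' * H t).trace = if t = t' then 1 else 0)
    (y₀ : Y) {p2 : Fin d → Y → Fin d → Y → ℂ}
    (hp2 : ∀ x1 y1 y2 y2', ∑ x2, p2 x2 y2 x1 y1 = ∑ x2, p2 x2 y2' x1 y1)
    (t1 : Y × Fin (d - 1)) (y2 : Y) (x2 : Fin d) :
    ∑ t2, chatCoeff y₀ g p2 t1 t2 * (outer (w y2 x2) * H t2).trace =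
      gMoment y₀ g (p2 x2 y2) (some t1) := by
  have hcoeff : ∀ t2, chatCoeff y₀ g p2 t1 t2 =
      ∑ x1, (g t1.1 x1 t1.2 : ℂ) * gMoment y₀ g (fun x y => p2 x y x1 t1.1) t2 := fun t2 => by
    simp only [chatCoeff, gMoment, mul_sum, mul_assoc]
  simp_rw [hcoeff, sum_mul, mul_assoc]
  rw [sum_comm]
  simp_rw [← mul_sum, sum_gMoment_mul_trace_outer_mul horth hdual y₀ (hp2 _ _)]
  rfl

theorem sum_chatIdCoeff_mul_trace_outer_mul
    (horth : ∀ y (x x' : Fin d), star (w y x) ⬝ᵥ w y x' = if x = x' then 1 else 0)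
    (hdual : ∀ t t', (Gfam w g t' * H t).trace = if t = t' then 1 else 0)
    (y₀ : Y) (p1 : Fin d → Y → ℂ) {p2 : Fin d → Y → Fin d → Y → ℂ} {p20 : Fin d → Y → ℂ}
    (hp2 : ∀ x1 y1 y2 y2', ∑ x2, p2 x2 y2 x1 y1 = ∑ x2, p2 x2 y2' x1 y1)
    (hp20 : ∀ y y', ∑ x, p20 x y = ∑ x, p20 x y') (y2 : Y) (x2 : Fin d) :
    ∑ t2, chatIdCoeff y₀ g H p1 p2 p20 t2 * (outer (w y2 x2) * H t2).trace =
      p20 x2 y2 - ∑ t1, ∑ t1', gMoment y₀ g p1 (some t1) * (H (some t1) * H (some t1')).trace *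
        gMoment y₀ g (p2 x2 y2) (some t1') := by
  simp_rw [chatIdCoeff, sub_mul, sum_sub_distrib, sum_mul,
    sum_gMoment_mul_trace_outer_mul horth hdual y₀ hp20]
  congr 1
  rw [sum_comm]
  refine sum_congr rfl fun t1 _ => ?_
  rw [sum_comm]
  refine sum_congr rfl fun t1' _ => ?_
  simp_rw [mul_assoc, ← mul_sum, sum_chatCoeff_mul_trace_outer_mul horth hdual y₀ hp2]

theorem trace_outer_kronecker_mul_ptranspose1_ChatP
    (horth : ∀ y (x x' : Fin d), star (w y x) ⬝ᵥ w y x' = if x = x' then 1 else 0)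
    (htraceless : ∀ y z, (Gfam w g (some (y, z))).trace = 0)
    (hdual : ∀ t t', (Gfam w g t' * H t).trace = if t = t' then 1 else 0)
    (hcomplete : ∀ M : Matrix (Fin d) (Fin d) ℂ, M.IsHermitian →
      M = ∑ t : Option (Y × Fin (d - 1)), (Gfam w g t * M).trace • H t)
    (y₀ : Y) (p1 : Fin d → Y → ℂ) {p2 : Fin d → Y → Fin d → Y → ℂ} {p20 : Fin d → Y → ℂ}
    (hp2 : ∀ x1 y1 y2 y2', ∑ x2, p2 x2 y2 x1 y1 = ∑ x2, p2 x2 y2' x1 y1)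
    (hp20 : ∀ y y', ∑ x, p20 x y = ∑ x, p20 x y')
    (hC1 : ∀ y1 y2 x2, ∑ x1, p2 x2 y2 x1 y1 = d * p20 x2 y2 -
      d * ∑ t1, ∑ t1', gMoment y₀ g p1 (some t1) * (H (some t1) * H (some t1')).trace *
        gMoment y₀ g (p2 x2 y2) (some t1'))
    (y1 y2 : Y) (x1 x2 : Fin d) :
    ((outer (w y1 x1) ⊗ₖ outer (w y2 x2)) * ptranspose1 (ChatP y₀ g H p1 p2 p20)).trace =
      p2 x2 y2 x1 y1 := by
  have : NeZero d := ⟨x1.pos.ne'⟩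
  set φ : Option (Y × Fin (d - 1)) → ℂ :=
    fun t => t.elim (∑ x1, p2 x2 y2 x1 y1) (gMoment y₀ g (p2 x2 y2) ∘ some)
  have hcorr : ∑ t2, chatIdCoeff y₀ g H p1 p2 p20 t2 * (outer (w y2 x2) * H t2).trace =
      (d : ℂ)⁻¹ * ∑ x1, p2 x2 y2 x1 y1 := by
    rw [sum_chatIdCoeff_mul_trace_outer_mul horth hdual y₀ p1 hp2 hp20, hC1, ← mul_sub,
      inv_mul_cancel_left₀ (NeZero.ne _)]
  calc ((outer (w y1 x1) ⊗ₖ outer (w y2 x2)) * ptranspose1 (ChatP y₀ g H p1 p2 p20)).trace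
      = ∑ t1, gMoment y₀ g (p2 x2 y2) (some t1) * (outer (w y1 x1) * H (some t1)).trace +
          ∑ t2, chatIdCoeff y₀ g H p1 p2 p20 t2 * (outer (w y2 x2) * H t2).trace := by
        simp_rw [trace_kronecker_mul_ptranspose1_ChatP, trace_outer_of_orthonormal _ (horth _),
          one_mul, ← sum_chatCoeff_mul_trace_outer_mul horth hdual y₀ hp2, sum_mul]
        congr 1
        exact sum_congr rfl fun _ _ => sum_congr rfl fun _ _ => by ring
    _ = ∑ t, φ t * (outer (w y1 x1) * H t).trace := by
        rw [hcorr, Fintype.sum_option, H_none_eq htraceless hcomplete, Matrix.mul_smul,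
          Matrix.mul_one, Matrix.trace_smul, trace_outer_of_orthonormal _ (horth _), smul_eq_mul,
          mul_one, add_comm, mul_comm]
        rfl
    _ = p2 x2 y2 x1 y1 :=
        sum_mul_trace_outer_mul_eq_of_moments horth hdual (p := fun x1 => p2 x2 y2 x1 y1) rfl
          (fun _ => rfl) x1

end Reconstruction

section ObservedDistribution

variable {d : ℕ} {Y : Type*} {Q : ∀ y1 y2 : Option Y, XSp d Y y1 → XSp d Y y2 → ℝ}

theorem sum_marg_some_eq_one
    (hQsum : ∀ y1 y2 : Option Y, ∑ x1 : XSp d Y y1, ∑ x2 : XSp d Y y2, Q y1 y2 x1 x2 = 1)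
    (y : Y) : ∑ x : Fin d, marg Q (some y) x = 1 :=
  hQsum (some y) none

theorem sum_div_marg_eq_one
    (hMarkov : ∀ (y1 : Option Y) (x1 : XSp d Y y1) (y2 : Option Y),
      ∑ x2 : XSp d Y y2, Q y1 y2 x1 x2 = marg Q y1 x1)
    (hC0 : ∀ (y1 : Y) (x1 : Fin d), 0 < marg Q (some y1) x1) (y1 y2 : Y) (x1 : Fin d) :
    ∑ x2 : Fin d, Q (some y1) (some y2) x1 x2 / marg Q (some y1) x1 = 1 := by
  refine (sum_div univ _ _).symm.trans ((div_eq_one_iff_eq (hC0 y1 x1).ne').mpr ?_)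
  exact hMarkov (some y1) x1 (some y2)

theorem sum_Q_none_eq_one
    (hQsum : ∀ y1 y2 : Option Y, ∑ x1 : XSp d Y y1, ∑ x2 : XSp d Y y2, Q y1 y2 x1 x2 = 1)
    (hMarkov : ∀ (y1 : Option Y) (x1 : XSp d Y y1) (y2 : Option Y),
      ∑ x2 : XSp d Y y2, Q y1 y2 x1 x2 = marg Q y1 x1) (y2 : Y) :
    ∑ x2 : Fin d, Q none (some y2) PUnit.unit x2 = 1 := by
  have : Unique (XSp d Y none) := inferInstanceAs (Unique PUnit)
  have hnone := hQsum none none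
  rw [Fintype.sum_unique] at hnone
  exact (hMarkov none PUnit.unit (some y2)).trans hnone

end ObservedDistribution

theorem stmt18_general {d : ℕ} {Y : Type*} [Fintype Y] [DecidableEq Y] (y₀ : Y)
    (w : Y → Fin d → Fin d → ℂ)
    (g : Y → Fin d → Fin (d - 1) → ℝ)
    (H : Option (Y × Fin (d - 1)) → Matrix (Fin d) (Fin d) ℂ)
    -- (A3): each {|x,y⟩ : x} is an orthonormal basis of ℂ^d, so each E_{x|y} is rank one
    (horth : ∀ y (x x' : Fin d), star (w y x) ⬝ᵥ w y x' = if x = x' then 1 else 0)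
    -- each G_{y,z} is traceless
    (htraceless : ∀ y z, (Gfam w g (some (y, z))).trace = 0)
    -- (A1): {I} ∪ {G_{y,z}} is a basis of Herm(d), with dual basis H (Hermitian),
    -- expressed via the trace-duality and expansion properties
    (hdual : ∀ t t', (Gfam w g t' * H t).trace = if t = t' then 1 else 0)
    (hcomplete : ∀ M : Matrix (Fin d) (Fin d) ℂ, M.IsHermitian →
      M = ∑ t : Option (Y × Fin (d - 1)), (Gfam w g t * M).trace • H t)
    -- the observed family of distributions Q
    (Q : ∀ y1 y2 : Option Y, XSp d Y y1 → XSp d Y y2 → ℝ)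
    (hQsum : ∀ y1 y2 : Option Y, ∑ x1 : XSp d Y y1, ∑ x2 : XSp d Y y2, Q y1 y2 x1 x2 = 1)
    -- Markov condition X1−Y1−Y2: the marginal of X1 does not depend on y2
    (hMarkov : ∀ (y1 : Option Y) (x1 : XSp d Y y1) (y2 : Option Y),
      ∑ x2 : XSp d Y y2, Q y1 y2 x1 x2 = marg Q y1 x1)
    -- (C0): full support of the first marginal
    (hC0 : ∀ (y1 : Y) (x1 : Fin d), 0 < marg Q (some y1) x1)
    -- (C1): the algebraic consistency condition
    (hC1 : ∀ (y1 y2 : Y) (x2 : Fin d),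
      ∑ x1 : Fin d,
          ((Q (some y1) (some y2) x1 x2 / marg Q (some y1) x1 : ℝ) : ℂ)
        = (d : ℂ) * ((Q none (some y2) PUnit.unit x2 : ℝ) : ℂ)
          - (d : ℂ) *
            ∑ t1 : Y × Fin (d - 1), ∑ t1' : Y × Fin (d - 1),
              (∑ x1 : Fin d, (g t1.1 x1 t1.2 : ℂ) * ((marg Q (some t1.1) x1 : ℝ) : ℂ))
                * (H (some t1) * H (some t1')).trace
                * (∑ x1' : Fin d, (g t1'.1 x1' t1'.2 : ℂ) *
                    ((Q (some t1'.1) (some y2) x1' x2 / marg Q (some t1'.1) x1' : ℝ) : ℂ))) :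
    ∀ (y1 y2 : Y) (x1 x2 : Fin d),
      ((marg Q (some y1) x1 : ℝ) : ℂ)
          = (outer (w y1 x1) * rho1P g H (fun x y => marg Q (some y) x)).trace
      ∧ ((Q (some y1) (some y2) x1 x2 / marg Q (some y1) x1 : ℝ) : ℂ)
          = ((outer (w y1 x1) ⊗ₖ outer (w y2 x2)) *
              ptranspose1 (ChatP y₀ g H
                (fun x y => ((marg Q (some y) x : ℝ) : ℂ))
                (fun x2' y2' x1' y1' =>
                  ((Q (some y1') (some y2') x1' x2' / marg Q (some y1') x1' : ℝ) : ℂ))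
                (fun x2' y2' => ((Q none (some y2') PUnit.unit x2' : ℝ) : ℂ)))).trace
      ∧ ((Q (some y1) (some y2) x1 x2 : ℝ) : ℂ)
          = (outer (w y1 x1) * rho1P g H (fun x y => marg Q (some y) x)).trace *
            ((outer (w y1 x1) ⊗ₖ outer (w y2 x2)) *
              ptranspose1 (ChatP y₀ g H
                (fun x y => ((marg Q (some y) x : ℝ) : ℂ))
                (fun x2' y2' x1' y1' =>
                  ((Q (some y1') (some y2') x1' x2' / marg Q (some y1') x1' : ℝ) : ℂ))
                (fun x2' y2' => ((Q none (some y2') PUnit.unit x2' : ℝ) : ℂ)))).trace := by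
  intro y1 y2 x1 x2
  have hstate := trace_outer_mul_rho1P horth hdual (sum_marg_some_eq_one hQsum) y1 x1
  have hchoi := trace_outer_kronecker_mul_ptranspose1_ChatP horth htraceless hdual hcomplete y₀
    (fun x y => ((marg Q (some y) x : ℝ) : ℂ))
    (p2 := fun x2 y2 x1 y1 => ((Q (some y1) (some y2) x1 x2 / marg Q (some y1) x1 : ℝ) : ℂ))
    (p20 := fun x2 y2 => ((Q none (some y2) PUnit.unit x2 : ℝ) : ℂ))
    (fun _ _ _ _ => by simp only [← Complex.ofReal_sum, sum_div_marg_eq_one hMarkov hC0])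
    (fun y y' => (Complex.ofReal_sum _ _).symm.trans <| congrArg Complex.ofReal
      ((sum_Q_none_eq_one hQsum hMarkov y).trans (sum_Q_none_eq_one hQsum hMarkov y').symm)
        |>.trans (Complex.ofReal_sum _ _)) hC1
    y1 y2 x1 x2
  refine ⟨hstate.symm, hchoi.symm, ?_⟩
  rw [hstate, hchoi, ← Complex.ofReal_mul, mul_div_cancel₀ _ (hC0 y1 x1).ne']

/-- under (A1), (A3), the Markov condition X1−Y1−Y2, (C0), and (C1),
the observed distribution is exactly reproduced by the reconstructed pair (ρ1[P], Ĉ[P]). -/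
theorem stmt18 {d : ℕ} (hd : 2 ≤ d) {Y : Type*} [Fintype Y] [DecidableEq Y] (y₀ : Y)
    (w : Y → Fin d → Fin d → ℂ)
    (g : Y → Fin d → Fin (d - 1) → ℝ)
    (H : Option (Y × Fin (d - 1)) → Matrix (Fin d) (Fin d) ℂ)
    -- (A3): each {|x,y⟩ : x} is an orthonormal basis of ℂ^d, so each E_{x|y} is rank one
    (horth : ∀ y (x x' : Fin d), star (w y x) ⬝ᵥ w y x' = if x = x' then 1 else 0)
    -- each G_{y,z} is traceless
    (htraceless : ∀ y z, (Gfam w g (some (y, z))).trace = 0)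
    -- (A1): {I} ∪ {G_{y,z}} is a basis of Herm(d), with dual basis H (Hermitian),
    -- expressed via the trace-duality and expansion properties
    (hH : ∀ t, (H t).IsHermitian)
    (hdual : ∀ t t', (Gfam w g t' * H t).trace = if t = t' then 1 else 0)
    (hcomplete : ∀ M : Matrix (Fin d) (Fin d) ℂ, M.IsHermitian →
      M = ∑ t : Option (Y × Fin (d - 1)), (Gfam w g t * M).trace • H t)
    -- the observed family of distributions Q
    (Q : ∀ y1 y2 : Option Y, XSp d Y y1 → XSp d Y y2 → ℝ)
    (hQnonneg : ∀ y1 y2 x1 x2, 0 ≤ Q y1 y2 x1 x2)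
    (hQsum : ∀ y1 y2 : Option Y, ∑ x1 : XSp d Y y1, ∑ x2 : XSp d Y y2, Q y1 y2 x1 x2 = 1)
    -- Markov condition X1−Y1−Y2: the marginal of X1 does not depend on y2
    (hMarkov : ∀ (y1 : Option Y) (x1 : XSp d Y y1) (y2 : Option Y),
      ∑ x2 : XSp d Y y2, Q y1 y2 x1 x2 = marg Q y1 x1)
    -- (C0): full support of the first marginal
    (hC0 : ∀ (y1 : Y) (x1 : Fin d), 0 < marg Q (some y1) x1)
    -- (C1): the algebraic consistency condition
    (hC1 : ∀ (y1 y2 : Y) (x2 : Fin d),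
      ∑ x1 : Fin d,
          ((Q (some y1) (some y2) x1 x2 / marg Q (some y1) x1 : ℝ) : ℂ)
        = (d : ℂ) * ((Q none (some y2) PUnit.unit x2 : ℝ) : ℂ)
          - (d : ℂ) *
            ∑ t1 : Y × Fin (d - 1), ∑ t1' : Y × Fin (d - 1),
              (∑ x1 : Fin d, (g t1.1 x1 t1.2 : ℂ) * ((marg Q (some t1.1) x1 : ℝ) : ℂ))
                * (H (some t1) * H (some t1')).trace
                * (∑ x1' : Fin d, (g t1'.1 x1' t1'.2 : ℂ) *
                    ((Q (some t1'.1) (some y2) x1' x2 / marg Q (some t1'.1) x1' : ℝ) : ℂ))) :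
    ∀ (y1 y2 : Y) (x1 x2 : Fin d),
      ((marg Q (some y1) x1 : ℝ) : ℂ)
          = (outer (w y1 x1) * rho1P g H (fun x y => marg Q (some y) x)).trace
      ∧ ((Q (some y1) (some y2) x1 x2 / marg Q (some y1) x1 : ℝ) : ℂ)
          = ((outer (w y1 x1) ⊗ₖ outer (w y2 x2)) *
              ptranspose1 (ChatP y₀ g H
                (fun x y => ((marg Q (some y) x : ℝ) : ℂ))
                (fun x2' y2' x1' y1' =>
                  ((Q (some y1') (some y2') x1' x2' / marg Q (some y1') x1' : ℝ) : ℂ))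
                (fun x2' y2' => ((Q none (some y2') PUnit.unit x2' : ℝ) : ℂ)))).trace
      ∧ ((Q (some y1) (some y2) x1 x2 : ℝ) : ℂ)
          = (outer (w y1 x1) * rho1P g H (fun x y => marg Q (some y) x)).trace *
            ((outer (w y1 x1) ⊗ₖ outer (w y2 x2)) *
              ptranspose1 (ChatP y₀ g H
                (fun x y => ((marg Q (some y) x : ℝ) : ℂ))
                (fun x2' y2' x1' y1' =>
                  ((Q (some y1') (some y2') x1' x2' / marg Q (some y1') x1' : ℝ) : ℂ))
                (fun x2' y2' => ((Q none (some y2') PUnit.unit x2' : ℝ) : ℂ)))).trace :=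
  stmt18_general y₀ w g H horth htraceless hdual hcomplete Q hQsum hMarkov hC0 hC1
end
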